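/- Let K be a totally complex number field with at least two archimedean places such that for every archimedean place w of K there exists a nonzero ξ^{(w)} ∈ O_K with |ξ^{(w)}|_v < 1 for all archimedean v ≠ w and with Q(ξ^{(w)}) a proper subfield k^{(w)} of K. Then, with F̃ = ∩_{w|∞} k^{(w)}, the field F̃ is the maximal totally real subfield of K, K/F̃ is Galois, and Aut(K/F̃) is generated by the automorphisms σ_w^{-1} ρ σ_w over all archimedean places w. -/

import Mathlib

open NumberField

/-- `c_K = (2/π)^{s/d} |Δ_K|^{1/(2d)}`. -/
noncomputable def minkowskiConst (K : Type*) [Field K] [NumberField K] : ℝ :=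
  (2 / Real.pi) ^ ((InfinitePlace.nrComplexPlaces K : ℝ) / (Module.finrank ℚ K)) *
    |(discr K : ℝ)| ^ ((1 : ℝ) / (2 * (Module.finrank ℚ K : ℝ)))

/-- Absolute multiplicative Weil height of an algebraic integer of `K`. -/
noncomputable def intHeight {K : Type*} [Field K] [NumberField K] (α : K) : ℝ :=
  (∏ φ : K →+* ℂ, max 1 ‖φ α‖) ^ ((Module.finrank ℚ K : ℝ)⁻¹)

/-- The normalized absolute value `|·|_v = ‖·‖_v^{d_v/d}` at an infinite place. -/
noncomputable def placeNorm {K : Type*} [Field K] [NumberField K]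
    (v : InfinitePlace K) (α : K) : ℝ :=
  (v α) ^ ((v.mult : ℝ) / (Module.finrank ℚ K : ℝ))

/-!
Fix a place `w` and put `σ = σ_w`, `ξ = ξ^{(w)}`, `k = ℚ(ξ)`. Since `|ξ|_v < 1` for `v ≠ w` and
`ξ` is a nonzero integer, the product formula gives `|σ ξ| ≥ 1`; so an embedding `φ` with
`φ ξ = σ ξ` induces `w`, i.e. is `σ` or `ρσ`. These are exactly the embeddings extending `σ|_k`,
and there are `[K : k] ≥ 2` of them. Hence `[K : k] = 2`, `σ(k) ⊆ ℝ` and `σ` is not real, so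
`K/k` is Galois with group generated by `τ_w = σ⁻¹ρσ`, and `k` is the fixed field of `τ_w`.
Therefore `F̃` is the fixed field of the group generated by the `τ_w`, which makes `K/F̃` Galois
with that group, and `x ∈ F̃` iff `σ_w x` is real for all `w`, i.e. `φ x` is real for all `φ`.
-/

open NumberField.InfinitePlace NumberField.ComplexEmbedding IntermediateField Module

section Galois

variable {F E : Type*} [Field F] [Field E] [Algebra F E]

theorem IntermediateField.mem_fixedField_closure_iff (S : Set Gal(E/F)) (x : E) :
    x ∈ fixedField (Subgroup.closure S) ↔ ∀ g ∈ S, g x = x := by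
  rw [mem_fixedField_iff]
  exact Subgroup.closure_le (MulAction.stabilizer Gal(E/F) x)

theorem IsGalois.of_forall_mem_iff [FiniteDimensional F E] {ι : Type*} (τ : ι → Gal(E/F))
    {L : IntermediateField F E} (hL : ∀ x, x ∈ L ↔ ∀ i, τ i x = x) : IsGalois L E := by
  obtain rfl : L = fixedField (Subgroup.closure (Set.range τ)) := by
    ext x
    rw [hL, mem_fixedField_closure_iff, Set.forall_mem_range]
  exact IsGalois.of_fixed_field E (Subgroup.closure (Set.range τ))

theorem Subgroup.closure_eq_top_of_forall_fixed [FiniteDimensional F E] (S : Set Gal(E/F))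
    (hS : ∀ x, (∀ g ∈ S, g x = x) → x ∈ (⊥ : IntermediateField F E)) :
    Subgroup.closure S = ⊤ := by
  have hbot : fixedField (Subgroup.closure S) = ⊥ :=
    eq_bot_iff.mpr fun x hx => hS x ((mem_fixedField_closure_iff S x).mp hx)
  rw [← fixingSubgroup_fixedField (Subgroup.closure S), hbot, fixingSubgroup_bot]

theorem Subgroup.closure_eq_top_of_forall_mem_iff [FiniteDimensional F E] {ι : Type*}
    (τ : ι → Gal(E/F)) {L : IntermediateField F E} (hL : ∀ x, x ∈ L ↔ ∀ i, τ i x = x)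
    (S : Set Gal(E/L)) (hS : ∀ i (g : Gal(E/L)), (∀ x, g x = τ i x) → g ∈ S) :
    Subgroup.closure S = ⊤ := by
  refine closure_eq_top_of_forall_fixed S fun x hx =>
    IntermediateField.mem_bot.mpr ⟨⟨x, (hL x).mpr fun i => ?_⟩, rfl⟩
  have hτ : τ i ∈ L.fixingSubgroup :=
    (mem_fixingSubgroup_iff _ _).mpr fun y hy => (hL y).mp hy i
  exact hx _ (hS i (fixingSubgroupEquiv L ⟨τ i, hτ⟩) fun _ => rfl)

end Galois

namespace NumberField.ComplexEmbedding

section Extension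

variable {F E : Type*} [Field F] [Field E] [Algebra F E] [FiniteDimensional F E]
  [Algebra.IsSeparable F E]

theorem card_extension_eq_finrank (ψ : F →+* ℂ) :
    Nat.card (ComplexEmbedding.Extension E ψ) = finrank F E := by
  let := ψ.toAlgebra
  rw [← AlgHom.card F E ℂ, Fintype.card_eq_nat_card]
  exact Nat.card_congr
    { toFun φ := ⟨φ.1, RingHom.congr_fun φ.2.over⟩
      invFun f := ⟨f.toRingHom, liesOver_iff.mpr (RingHom.ext f.commutes)⟩
      left_inv _ := rfl
      right_inv _ := rfl }

theorem finrank_eq_two_of_liesOver_subset {ψ : F →+* ℂ} {φ : E →+* ℂ}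
    (hsub : {χ : E →+* ℂ | ComplexEmbedding.LiesOver χ ψ} ⊆ {φ, conjugate φ})
    (hF : finrank F E ≠ 1) :
    finrank F E = 2 ∧ ¬IsReal φ ∧ ComplexEmbedding.LiesOver (conjugate φ) ψ := by
  have hcard : {χ : E →+* ℂ | ComplexEmbedding.LiesOver χ ψ}.ncard = finrank F E := by
    rw [← Nat.card_coe_set_eq]
    exact card_extension_eq_finrank ψ
  have hpos : 0 < finrank F E := finrank_pos
  have hnot : ¬{χ : E →+* ℂ | ComplexEmbedding.LiesOver χ ψ} ⊆ {φ} := fun h => by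
    have := Set.ncard_le_ncard h
    rw [Set.ncard_singleton] at this
    omega
  refine ⟨?_, fun hφ => hnot ?_, by_contra fun hc => hnot ?_⟩
  · have := (Set.ncard_le_ncard hsub).trans (Set.ncard_insert_le _ _)
    rw [Set.ncard_singleton] at this
    omega
  · rwa [isReal_iff.mp hφ, Set.pair_eq_singleton] at hsub
  · exact fun χ hχ => (hsub hχ).resolve_right fun h => hc (h ▸ hχ)

end Extension

section IsConj

variable {k K : Type*} [Field k] [Field K] [Algebra k K] {φ : K →+* ℂ} {σ : Gal(K/k)}

theorem IsConj.apply_eq_self_iff_im_eq_zero (hσ : IsConj φ σ) (x : K) :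
    σ x = x ↔ (φ x).im = 0 := by
  rw [← φ.injective.eq_iff, hσ.eq, Complex.star_def, Complex.conj_eq_iff_im]

theorem IsConj.apply_eq_self_iff_mem_bot [Algebra.IsQuadraticExtension k K]
    [Algebra.IsSeparable k K] (hσ : IsConj φ σ) (hφ : ¬IsReal φ) (x : K) :
    σ x = x ↔ x ∈ (⊥ : IntermediateField k K) := by
  have hgen : Subgroup.zpowers σ = ⊤ := by
    refine Subgroup.eq_top_of_card_eq _ ?_
    rw [Nat.card_zpowers, orderOf_isConj_two_of_ne_one hσ ((isConj_ne_one_iff hσ).mpr hφ),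
      IsGalois.card_aut_eq_finrank, Algebra.IsQuadraticExtension.finrank_eq_two]
  have hfix : (∀ f : Gal(K/k), f x = x) ↔ ∀ f ∈ Subgroup.zpowers σ, f • x = x := by
    simp [hgen, AlgEquiv.smul_def]
  rw [IsGalois.mem_bot_iff_fixed, hfix, Subgroup.forall_mem_zpowers]
  exact (MulAction.mem_fixedBy_zpowers_iff_mem_fixedBy (g := σ)).symm

end IsConj

end NumberField.ComplexEmbedding

namespace NumberField.InfinitePlace

variable {K : Type*} [Field K]

theorem forall_embedding_im_eq_zero_iff (x : K) :
    (∀ w : InfinitePlace K, (w.embedding x).im = 0) ↔ ∀ φ : K →+* ℂ, (φ x).im = 0 := by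
  refine ⟨fun h φ => ?_, fun h w => h _⟩
  rcases embedding_mk_eq φ with hφ | hφ
  · exact hφ ▸ h (mk φ)
  · simpa [hφ] using h (mk φ)

variable [NumberField K]

theorem lt_one_of_placeNorm_lt_one {v : InfinitePlace K} {x : K} (h : placeNorm v x < 1) :
    v x < 1 :=
  lt_of_not_ge fun h1 => (Real.one_le_rpow h1 (by positivity)).not_gt h

section SmallAwayFrom

variable {w : InfinitePlace K} {a : 𝓞 K} (ha : a ≠ 0) (h : ∀ ⦃v⦄, v ≠ w → v a < 1)
include ha h

theorem mk_eq_of_apply_eq_embedding {φ : K →+* ℂ} (hφ : φ a = w.embedding a) : mk φ = w := by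
  by_contra hne
  have := h hne
  rw [apply, hφ, norm_embedding_eq] at this
  exact (one_le_of_lt_one ha h).not_gt this

theorem liesOver_adjoin_subset_pair :
    {φ : K →+* ℂ | ComplexEmbedding.LiesOver φ (w.embedding.comp (algebraMap ℚ⟮(a : K)⟯ K))} ⊆
      {w.embedding, conjugate w.embedding} := by
  intro φ hφ
  have hφa : φ a = w.embedding a :=
    RingHom.congr_fun hφ.over ⟨a, mem_adjoin_simple_self ℚ (a : K)⟩
  rcases (mk_eq_iff (ψ := w.embedding)).mp
      ((mk_eq_of_apply_eq_embedding ha h hφa).trans (mk_embedding w).symm) with hσ | hσ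
  · exact Or.inl hσ
  · exact Or.inr (by rw [← hσ]; exact (star_star φ).symm)

theorem exists_isConj_forall_apply_eq_self_iff (hne : ℚ⟮(a : K)⟯ ≠ ⊤) :
    ∃ τ : Gal(K/ℚ), IsConj w.embedding τ ∧ ∀ x, τ x = x ↔ x ∈ ℚ⟮(a : K)⟯ := by
  obtain ⟨h2, hnr, hconj⟩ := finrank_eq_two_of_liesOver_subset
    (liesOver_adjoin_subset_pair ha h) (mt finrank_eq_one_iff_eq_top.mp hne)
  have : Algebra.IsQuadraticExtension ℚ⟮(a : K)⟯ K := ⟨h2⟩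
  obtain ⟨τ, hτ⟩ :=
    exists_comp_symm_eq_of_comp_eq w.embedding (conjugate w.embedding) hconj.over.symm
  have hτc : IsConj w.embedding τ.symm := hτ.symm
  refine ⟨τ.symm.restrictScalars ℚ, hτc, fun x => ?_⟩
  rw [AlgEquiv.restrictScalars_apply, hτc.apply_eq_self_iff_mem_bot hnr, mem_bot]
  simp

end SmallAwayFrom

end NumberField.InfinitePlace

theorem statement19_general (K : Type*) [Field K] [NumberField K]
    (ξ : InfinitePlace K → 𝓞 K) (hξ : ∀ w, ξ w ≠ 0)
    (hsmall : ∀ w, ∀ v : InfinitePlace K, v ≠ w → placeNorm v (ξ w : K) < 1)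
    (k : InfinitePlace K → IntermediateField ℚ K)
    (hk : ∀ w, k w = IntermediateField.adjoin ℚ {(ξ w : K)})
    (hproper : ∀ w, k w ≠ ⊤)
    (F : IntermediateField ℚ K) (hF : F = ⨅ w : InfinitePlace K, k w) :
    (∀ x : K, x ∈ F ↔ ∀ φ : K →+* ℂ, (φ x).im = 0) ∧
    IsGalois (↥F) K ∧
    Subgroup.closure {g : K ≃ₐ[↥F] K | ∃ w : InfinitePlace K,
      ∀ x : K, w.embedding (g x) = starRingEnd ℂ (w.embedding x)} = ⊤ := by
  obtain rfl : k = fun w => ℚ⟮(ξ w : K)⟯ := funext hk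
  subst hF
  choose τ hτconj hτfix using fun w => exists_isConj_forall_apply_eq_self_iff (hξ w)
    (fun v hv => lt_one_of_placeNorm_lt_one (hsmall w v hv)) (hproper w)
  have hmem (x : K) : x ∈ ⨅ w, ℚ⟮(ξ w : K)⟯ ↔ ∀ w, τ w x = x := by
    simp only [← SetLike.mem_coe, IntermediateField.coe_iInf, Set.mem_iInter, hτfix]
  refine ⟨fun x => ?_, IsGalois.of_forall_mem_iff τ hmem,
    Subgroup.closure_eq_top_of_forall_mem_iff τ hmem _ fun w g hg => ⟨w, fun x => ?_⟩⟩
  · simp only [hmem, (hτconj _).apply_eq_self_iff_im_eq_zero, forall_embedding_im_eq_zero_iff]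
  · rw [hg]
    exact (hτconj w).eq x

/-- If $K$ is totally complex with at least two archimedean places and for every
archimedean place $w$ there is a nonzero $\xi^{(w)}\in O_K$ with $|\xi^{(w)}|_v<1$
for all archimedean $v\ne w$ whose field $k^{(w)}=\mathbb{Q}(\xi^{(w)})$ is proper in
$K$, then $\tilde F=\bigcap_w k^{(w)}$ is the maximal totally real subfield of $K$,
$K/\tilde F$ is Galois, and $\mathrm{Aut}(K/\tilde F)$ is generated by the maps
$\sigma_w^{-1}\rho\sigma_w$. -/
theorem statement19 (K : Type*) [Field K] [NumberField K]
    (htc : ∀ v : InfinitePlace K, v.IsComplex)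
    (hcard : 2 ≤ Fintype.card (InfinitePlace K))
    (ξ : InfinitePlace K → 𝓞 K) (hξ : ∀ w, ξ w ≠ 0)
    (hsmall : ∀ w, ∀ v : InfinitePlace K, v ≠ w → placeNorm v (ξ w : K) < 1)
    (k : InfinitePlace K → IntermediateField ℚ K)
    (hk : ∀ w, k w = IntermediateField.adjoin ℚ {(ξ w : K)})
    (hproper : ∀ w, k w ≠ ⊤)
    (F : IntermediateField ℚ K) (hF : F = ⨅ w : InfinitePlace K, k w) :
    (∀ x : K, x ∈ F ↔ ∀ φ : K →+* ℂ, (φ x).im = 0) ∧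
    IsGalois (↥F) K ∧
    Subgroup.closure {g : K ≃ₐ[↥F] K | ∃ w : InfinitePlace K,
      ∀ x : K, w.embedding (g x) = starRingEnd ℂ (w.embedding x)} = ⊤ :=
  statement19_general K ξ hξ hsmall k hk hproper F hF
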